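/- Let p ≥ 1 and q ≥ 2. For a ∈ ℝ^p and b ∈ ℝ^q let S(a,b) ∈ ℝ^{2pq} be the tuple consisting of all sums a_i + b_j and all differences a_i − b_j (1 ≤ i ≤ p, 1 ≤ j ≤ q). Then: (I) for all a, b one has 2(ρ_C(a) + ρ_C(b)) ≤ ρ_D(S(a,b)); (II) [for all (a,b) ≠ (0,0): 2(ρ_C(a) + ρ_C(b)) < ρ_D(S(a,b))] if and only if pq > 2. (This is the Benoist–Kobayashi inequality for the tensor embedding 𝔥 = 𝔰𝔭_p(ℂ) ⊕ 𝔰𝔭_q(ℂ) ⊂ 𝔤 = 𝔰𝔬_{4pq}(ℂ).) -/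
import Mathlib


open Finset

/-- `ρ_A(c) = Σ_{i<j} |c_i - c_j|`, written in the permutation-invariant
symmetric form `(1/2) Σ_{i,j} |c_i - c_j|`. -/
noncomputable def rhoA {ι : Type*} [Fintype ι] (c : ι → ℝ) : ℝ :=
  (∑ i, ∑ j, |c i - c j|) / 2

/-- `ρ_B(c) = Σ_{i<j} (|c_i - c_j| + |c_i + c_j|) + Σ_i |c_i|`, written in the
permutation-invariant symmetric form `(1/2) Σ_{i,j} (|c_i - c_j| + |c_i + c_j|)`. -/
noncomputable def rhoB {ι : Type*} [Fintype ι] (c : ι → ℝ) : ℝ :=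
  (∑ i, ∑ j, (|c i - c j| + |c i + c j|)) / 2

/-- `ρ_D(c) = Σ_{i<j} (|c_i - c_j| + |c_i + c_j|) = ρ_B(c) - Σ_i |c_i|`. -/
noncomputable def rhoD {ι : Type*} [Fintype ι] (c : ι → ℝ) : ℝ :=
  rhoB c - ∑ i, |c i|

/-- `ρ_C(c) = Σ_{i<j} (|c_i - c_j| + |c_i + c_j|) + 2 Σ_i |c_i| = ρ_B(c) + Σ_i |c_i|`. -/
noncomputable def rhoC {ι : Type*} [Fintype ι] (c : ι → ℝ) : ℝ :=
  rhoB c + ∑ i, |c i|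

/-- `ρ_{SO_n}` is `ρ_D` for even `n` and `ρ_B` for odd `n`. -/
noncomputable def rhoSO (n : ℕ) {ι : Type*} [Fintype ι] (c : ι → ℝ) : ℝ :=
  if Even n then rhoD c else rhoB c


lemma two_max (x y : ℝ) : |x - y| + |x + y| = 2 * max |x| |y| := by
  rcases abs_cases x with ⟨hx,hx'⟩|⟨hx,hx'⟩ <;> rcases abs_cases y with ⟨hy,hy'⟩|⟨hy,hy'⟩ <;>
  rcases abs_cases (x-y) with ⟨h1,h1'⟩|⟨h1,h1'⟩ <;> rcases abs_cases (x+y) with ⟨h2,h2'⟩|⟨h2,h2'⟩ <;>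
  rcases max_cases |x| |y| with ⟨h3,h3'⟩|⟨h3,h3'⟩ <;> linarith

lemma sorted_pairing {u v u' v' : ℝ} (h : v ≤ u) (h' : v' ≤ u') :
    max u u' + max v v' ≤ max u v' + max v u' := by
  rcases le_total u' u with hh|hh
  · have e1 : max u u' = u := max_eq_left hh
    have : max v v' ≤ max v u' := max_le_max le_rfl h'
    have : u ≤ max u v' := le_max_left _ _
    linarith
  · have e1 : max u u' = u' := max_eq_right hh
    have : max v v' ≤ max u v' := max_le_max h le_rfl
    have : u' ≤ max v u' := le_max_right _ _
    linarith

lemma key2 {u v u' v' : ℝ} (h0 : 0 ≤ v) (h0' : 0 ≤ v') (hv : v ≤ u) (hv' : v' ≤ u')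
    (hA : u' + v' ≤ u + v) :
    max u v' + max v u' + u + u' ≤
      (u + v) + (u + v) + max (u - v) (u' + v') + max (u - v) (u' - v') := by
  rcases le_total u' v with h|h <;>
    rcases max_cases u v' with ⟨h1,h1'⟩|⟨h1,h1'⟩ <;>
    rcases max_cases v u' with ⟨h2,h2'⟩|⟨h2,h2'⟩ <;>
    linarith [le_max_left (u-v) (u'+v'), le_max_right (u-v) (u'+v'),
      le_max_left (u-v) (u'-v'), le_max_right (u-v) (u'-v')]

lemma keyA (u v u' v' : ℝ) (hu : 0 ≤ u) (hv : 0 ≤ v) (hu' : 0 ≤ u') (hv' : 0 ≤ v') :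
    max u u' + max v v' + max u v + max u' v' ≤
      max (u+v) (u'+v') + max (u+v) |u'-v'| + max |u-v| (u'+v') + max |u-v| |u'-v'| := by
  set s := max u v with hs
  set t := min u v with ht
  set s' := max u' v' with hs'
  set t' := min u' v' with ht'
  have hts : t ≤ s := min_le_max
  have hts' : t' ≤ s' := min_le_max
  have ht0 : 0 ≤ t := le_min hu hv
  have ht0' : 0 ≤ t' := le_min hu' hv'
  have habs : |u - v| = s - t := by rw [hs, ht, ← max_sub_min_eq_abs]; rw [max_comm, min_comm]
  have habs' : |u' - v'| = s' - t' := by rw [hs', ht', ← max_sub_min_eq_abs]; rw [max_comm, min_comm]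
  have hsum : u + v = s + t := by rw [hs, ht, max_add_min]
  have hsum' : u' + v' = s' + t' := by rw [hs', ht', max_add_min]
  have hcross : max u u' + max v v' ≤ max s t' + max t s' := by
    rcases le_total v u with h|h <;> rcases le_total v' u' with h'|h'
    · rw [hs, ht, hs', ht', max_eq_left h, min_eq_right h, max_eq_left h', min_eq_right h']
      exact sorted_pairing h h'
    · rw [hs, ht, hs', ht', max_eq_left h, min_eq_right h, max_eq_right h', min_eq_left h']
    · rw [hs, ht, hs', ht', max_eq_right h, min_eq_left h, max_eq_left h', min_eq_right h']
      linarith [le_refl (max v v' + max u u')]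
    · rw [hs, ht, hs', ht', max_eq_right h, min_eq_left h, max_eq_right h', min_eq_left h']
      linarith [sorted_pairing h h']
  rw [habs, habs', hsum, hsum']
  have hmain : max s t' + max t s' + s + s' ≤
      max (s+t) (s'+t') + max (s+t) (s'-t') + max (s-t) (s'+t') + max (s-t) (s'-t') := by
    rcases le_total (s'+t') (s+t) with hA|hA
    · have k := key2 ht0 ht0' hts hts' hA
      have e1 : max (s+t) (s'+t') = s+t := max_eq_left hA
      have e2 : max (s+t) (s'-t') = s+t := max_eq_left (by linarith)
      linarith
    · have k := key2 ht0' ht0 hts' hts hA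
      have e1 : max (s+t) (s'+t') = s'+t' := max_eq_right hA
      have e2 : max (s-t) (s'+t') = s'+t' := max_eq_right (by linarith)
      have c1 : max s t' = max t' s := max_comm _ _
      have c2 : max t s' = max s' t := max_comm _ _
      have c3 : max (s+t) (s'-t') = max (s'-t') (s+t) := max_comm _ _
      have c4 : max (s-t) (s'-t') = max (s'-t') (s-t) := max_comm _ _
      linarith
  linarith

lemma keyD (x v v' : ℝ) (hx : 0 ≤ x) (hv : 0 ≤ v) (hv' : 0 ≤ v') :
    2*max v v' + x + (v + v' + max x v + max x v')/2 ≤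
      max (x+v) (x+v') + max (x+v) |x-v'| + max |x-v| (x+v') + max |x-v| |x-v'| := by
  rcases abs_cases (x-v) with ⟨h1,h1'⟩|⟨h1,h1'⟩ <;> rcases abs_cases (x-v') with ⟨h2,h2'⟩|⟨h2,h2'⟩ <;>
  rcases max_cases v v' with ⟨h3,h3'⟩|⟨h3,h3'⟩ <;> rcases max_cases x v with ⟨h4,h4'⟩|⟨h4,h4'⟩ <;>
  rcases max_cases x v' with ⟨h5,h5'⟩|⟨h5,h5'⟩ <;>
  linarith [le_max_left (x+v) (x+v'), le_max_right (x+v) (x+v'),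
    le_max_left (x+v) |x-v'|, le_max_right (x+v) |x-v'|,
    le_max_left |x-v| (x+v'), le_max_right |x-v| (x+v'),
    le_max_left |x-v| |x-v'|, le_max_right |x-v| |x-v'|]

lemma pair_abs (α β : ℝ) :
    (|α+β| = |α| + |β| ∧ |α-β| = |(|α| - |β|)|) ∨
    (|α+β| = |(|α| - |β|)| ∧ |α-β| = |α| + |β|) := by
  rcases abs_cases α with ⟨h1,h1'⟩|⟨h1,h1'⟩ <;> rcases abs_cases β with ⟨h2,h2'⟩|⟨h2,h2'⟩
  · left
    rw [h1, h2]
    exact ⟨abs_of_nonneg (by linarith), rfl⟩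
  · right
    rw [h1, h2]
    constructor
    · congr 1; ring
    · exact abs_of_nonneg (by linarith)
  · right
    rw [h1, h2]
    constructor
    · rw [show (-α - β) = -(α+β) by ring, abs_neg]
    · rw [abs_of_nonpos (by linarith : α - β ≤ 0)]; ring
  · left
    rw [h1, h2]
    constructor
    · rw [abs_of_nonpos (by linarith : α + β ≤ 0)]; ring
    · rw [show (-α - -β) = -(α-β) by ring, abs_neg]

lemma keyA' (α β α' β' : ℝ) :
    max |α| |α'| + max |β| |β'| + max |α| |β| + max |α'| |β'| ≤
      max |α+β| |α'+β'| + max |α+β| |α'-β'| + max |α-β| |α'+β'| + max |α-β| |α'-β'| := by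
  have k := keyA |α| |β| |α'| |β'| (abs_nonneg _) (abs_nonneg _) (abs_nonneg _) (abs_nonneg _)
  rcases pair_abs α β with ⟨e1,e2⟩|⟨e1,e2⟩ <;> rcases pair_abs α' β' with ⟨e3,e4⟩|⟨e3,e4⟩ <;>
    rw [e1,e2,e3,e4] <;> linarith [k]

lemma keyD' (α β β' : ℝ) :
    2*max |β| |β'| + |α| + (|β| + |β'| + max |α| |β| + max |α| |β'|)/2 ≤
      max |α+β| |α+β'| + max |α+β| |α-β'| + max |α-β| |α+β'| + max |α-β| |α-β'| := by
  have k := keyD |α| |β| |β'| (abs_nonneg _) (abs_nonneg _) (abs_nonneg _)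
  rcases pair_abs α β with ⟨e1,e2⟩|⟨e1,e2⟩ <;> rcases pair_abs α β' with ⟨e3,e4⟩|⟨e3,e4⟩ <;>
    rw [e1,e2,e3,e4] <;> linarith [k]

lemma rhoB_eq {ι : Type*} [Fintype ι] (c : ι → ℝ) : rhoB c = ∑ i, ∑ j, max |c i| |c j| := by
  unfold rhoB
  simp_rw [two_max, ← Finset.mul_sum]
  ring

lemma sum_fst {p q : ℕ} (F : Fin p → ℝ) : ∑ x : Fin p × Fin q, F x.1 = q * ∑ i, F i := by
  rw [Fintype.sum_prod_type]
  simp only [Finset.sum_const, Finset.card_univ, Fintype.card_fin, nsmul_eq_mul]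
  rw [← Finset.mul_sum]

lemma sum_snd {p q : ℕ} (F : Fin q → ℝ) : ∑ x : Fin p × Fin q, F x.2 = p * ∑ j, F j := by
  rw [Fintype.sum_prod_type]
  simp only [Finset.sum_const, Finset.card_univ, Fintype.card_fin, nsmul_eq_mul]

lemma double_inner {α : Type*} [Fintype α] (G : α → ℝ) :
    ∑ x : α, ∑ _x' : α, G x = (Fintype.card α) * ∑ x, G x := by
  simp only [Finset.sum_const, Finset.card_univ, nsmul_eq_mul]
  rw [← Finset.mul_sum]

lemma double_outer {α : Type*} [Fintype α] (G : α → ℝ) :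
    ∑ _x : α, ∑ x' : α, G x' = (Fintype.card α) * ∑ x, G x := by
  simp only [Finset.sum_const, Finset.card_univ, nsmul_eq_mul]

lemma avg_sum {n : ℕ} (f : Fin n → ℝ) :
    ∑ i : Fin n, ∑ j : Fin n, (f i + f j)/2 = n * ∑ i, f i := by
  have h : ∀ i : Fin n, ∑ j : Fin n, (f i + f j)/2 = (n * f i)/2 + (∑ j, f j)/2 := by
    intro i
    rw [← Finset.sum_div, Finset.sum_add_distrib, Finset.sum_const, Finset.card_univ,
      Fintype.card_fin, nsmul_eq_mul, add_div]
  rw [Finset.sum_congr rfl fun i _ => h i, Finset.sum_add_distrib, Finset.sum_const,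
    Finset.card_univ, Fintype.card_fin, nsmul_eq_mul, ← Finset.sum_div, ← Finset.mul_sum]
  ring

set_option maxHeartbeats 2000000 in
lemma main_ineq (p q : ℕ) (hp : 1 ≤ p) (hq : 2 ≤ q) (a : Fin p → ℝ) (b : Fin q → ℝ) :
    2 * (rhoC a + rhoC b) + (if 2 < p * q then (∑ i, |a i|) + (∑ j, |b j|) else 0) ≤
      rhoD (Sum.elim (fun x : Fin p × Fin q => a x.1 + b x.2)
        (fun x : Fin p × Fin q => a x.1 - b x.2)) := by
  have hA0 : 0 ≤ ∑ i, |a i| := Finset.sum_nonneg fun i _ => abs_nonneg _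
  have hB0 : 0 ≤ ∑ j, |b j| := Finset.sum_nonneg fun j _ => abs_nonneg _
  have hC0 : 0 ≤ ∑ i, ∑ j, max |a i| |b j| :=
    Finset.sum_nonneg fun i _ => Finset.sum_nonneg fun j _ =>
      le_trans (abs_nonneg _) (le_max_left _ _)
  have hMa0 : 0 ≤ ∑ i, ∑ i', max |a i| |a i'| :=
    Finset.sum_nonneg fun i _ => Finset.sum_nonneg fun i' _ =>
      le_trans (abs_nonneg _) (le_max_left _ _)
  have hMb0 : 0 ≤ ∑ j, ∑ j', max |b j| |b j'| :=
    Finset.sum_nonneg fun j _ => Finset.sum_nonneg fun j' _ =>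
      le_trans (abs_nonneg _) (le_max_left _ _)
  have hrCa : rhoC a = (∑ i, ∑ i', max |a i| |a i'|) + ∑ i, |a i| := by
    unfold rhoC; rw [rhoB_eq]
  have hrCb : rhoC b = (∑ j, ∑ j', max |b j| |b j'|) + ∑ j, |b j| := by
    unfold rhoC; rw [rhoB_eq]
  have hrD : rhoD (Sum.elim (fun x : Fin p × Fin q => a x.1 + b x.2)
        (fun x : Fin p × Fin q => a x.1 - b x.2)) =
      rhoB (Sum.elim (fun x : Fin p × Fin q => a x.1 + b x.2)
        (fun x : Fin p × Fin q => a x.1 - b x.2)) -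
      ∑ u : (Fin p × Fin q) ⊕ (Fin p × Fin q),
        |Sum.elim (fun x : Fin p × Fin q => a x.1 + b x.2)
          (fun x : Fin p × Fin q => a x.1 - b x.2) u| := rfl
  have hrBS : rhoB (Sum.elim (fun x : Fin p × Fin q => a x.1 + b x.2)
        (fun x : Fin p × Fin q => a x.1 - b x.2)) =
      ∑ x : Fin p × Fin q, ∑ x' : Fin p × Fin q,
        (max |a x.1 + b x.2| |a x'.1 + b x'.2| + max |a x.1 + b x.2| |a x'.1 - b x'.2|
         + max |a x.1 - b x.2| |a x'.1 + b x'.2| + max |a x.1 - b x.2| |a x'.1 - b x'.2|) := by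
    rw [rhoB_eq]
    simp only [Fintype.sum_sum_type, Sum.elim_inl, Sum.elim_inr, Finset.sum_add_distrib]
    ring
  have hSsum : (∑ u : (Fin p × Fin q) ⊕ (Fin p × Fin q),
        |Sum.elim (fun x : Fin p × Fin q => a x.1 + b x.2)
          (fun x : Fin p × Fin q => a x.1 - b x.2) u|) =
      2 * ∑ i, ∑ j, max |a i| |b j| := by
    simp only [Fintype.sum_sum_type, Sum.elim_inl, Sum.elim_inr]
    rw [← Finset.sum_add_distrib]
    have h : ∀ x : Fin p × Fin q, |a x.1 + b x.2| + |a x.1 - b x.2| = 2 * max |a x.1| |b x.2| :=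
      fun x => by have := two_max (a x.1) (b x.2); linarith
    rw [Finset.sum_congr rfl fun x _ => h x, ← Finset.mul_sum, Fintype.sum_prod_type]
  have hCP : (∑ x : Fin p × Fin q, max |a x.1| |b x.2|) = ∑ i, ∑ j, max |a i| |b j| := by
    rw [Fintype.sum_prod_type]
  have hMaA : (p : ℝ) * ∑ i, |a i| ≤ ∑ i, ∑ i', max |a i| |a i'| := by
    have h1 : ∀ i i' : Fin p, (|a i| + |a i'|)/2 ≤ max |a i| |a i'| := fun i i' => by
      rcases max_cases |a i| |a i'| with ⟨h,h'⟩|⟨h,h'⟩ <;> linarith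
    have h2 := Finset.sum_le_sum (f := fun i => ∑ i' : Fin p, (|a i| + |a i'|)/2)
      (g := fun i => ∑ i' : Fin p, max |a i| |a i'|)
      (fun i (_ : i ∈ Finset.univ) => Finset.sum_le_sum fun i' _ => h1 i i')
    rw [avg_sum (fun i => |a i|)] at h2
    exact h2
  have hMbB : (q : ℝ) * ∑ j, |b j| ≤ ∑ j, ∑ j', max |b j| |b j'| := by
    have h1 : ∀ j j' : Fin q, (|b j| + |b j'|)/2 ≤ max |b j| |b j'| := fun j j' => by
      rcases max_cases |b j| |b j'| with ⟨h,h'⟩|⟨h,h'⟩ <;> linarith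
    have h2 := Finset.sum_le_sum (f := fun j => ∑ j' : Fin q, (|b j| + |b j'|)/2)
      (g := fun j => ∑ j' : Fin q, max |b j| |b j'|)
      (fun j (_ : j ∈ Finset.univ) => Finset.sum_le_sum fun j' _ => h1 j j')
    rw [avg_sum (fun j => |b j|)] at h2
    exact h2
  have hqR : (2 : ℝ) ≤ (q : ℝ) := by exact_mod_cast hq
  rcases eq_or_lt_of_le hp with hp1 | hp2
  · -- p = 1
    subst hp1
    have hMaA1 : (∑ i : Fin 1, ∑ i' : Fin 1, max |a i| |a i'|) = ∑ i : Fin 1, |a i| := by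
      simp
    have hkeyD : (∑ x : Fin 1 × Fin q, ∑ x' : Fin 1 × Fin q,
          (2 * max |b x.2| |b x'.2| + |a x.1| + |b x.2|/2 + |b x'.2|/2
            + (max |a x.1| |b x.2|)/2 + (max |a x'.1| |b x'.2|)/2)) ≤
        ∑ x : Fin 1 × Fin q, ∑ x' : Fin 1 × Fin q,
          (max |a x.1 + b x.2| |a x'.1 + b x'.2| + max |a x.1 + b x.2| |a x'.1 - b x'.2|
           + max |a x.1 - b x.2| |a x'.1 + b x'.2| + max |a x.1 - b x.2| |a x'.1 - b x'.2|) := by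
      refine Finset.sum_le_sum fun x _ => Finset.sum_le_sum fun x' _ => ?_
      have e : x.1 = 0 := Subsingleton.elim _ _
      have e' : x'.1 = 0 := Subsingleton.elim _ _
      rw [e, e']
      have := keyD' (a 0) (b x.2) (b x'.2)
      linarith
    have s1 : (∑ x : Fin 1 × Fin q, ∑ x' : Fin 1 × Fin q, 2 * max |b x.2| |b x'.2|) =
        2 * (((1:ℕ) : ℝ) * (((1:ℕ) : ℝ) * ∑ j, ∑ j', max |b j| |b j'|)) := by
      simp only [← Finset.mul_sum]
      congr 1
      have h1 : ∀ x : Fin 1 × Fin q, (∑ x' : Fin 1 × Fin q, max |b x.2| |b x'.2|)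
          = ((1:ℕ):ℝ) * ∑ j', max |b x.2| |b j'| := fun x => sum_snd (fun j' => max |b x.2| |b j'|)
      rw [Finset.sum_congr rfl fun x _ => h1 x, ← Finset.mul_sum,
        sum_snd (fun j => ∑ j', max |b j| |b j'|)]
    have s2 : (∑ x : Fin 1 × Fin q, ∑ _x' : Fin 1 × Fin q, |a x.1|) =
        ((q:ℝ) * ((q : ℝ) * ∑ i, |a i|)) := by
      rw [double_inner (fun x : Fin 1 × Fin q => |a x.1|), sum_fst (fun i => |a i|)]
      simp
    have s3 : (∑ x : Fin 1 × Fin q, ∑ _x' : Fin 1 × Fin q, |b x.2|/2) =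
        (q:ℝ) * ((((1:ℕ):ℝ) * ∑ j, |b j|)/2) := by
      rw [double_inner (fun x : Fin 1 × Fin q => |b x.2|/2), ← Finset.sum_div,
        sum_snd (fun j => |b j|)]
      simp
    have s4 : (∑ _x : Fin 1 × Fin q, ∑ x' : Fin 1 × Fin q, |b x'.2|/2) =
        (q:ℝ) * ((((1:ℕ):ℝ) * ∑ j, |b j|)/2) := by
      rw [double_outer (fun x : Fin 1 × Fin q => |b x.2|/2), ← Finset.sum_div,
        sum_snd (fun j => |b j|)]
      simp
    have s5 : (∑ x : Fin 1 × Fin q, ∑ _x' : Fin 1 × Fin q, (max |a x.1| |b x.2|)/2) =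
        (q:ℝ) * ((∑ i, ∑ j, max |a i| |b j|)/2) := by
      rw [double_inner (fun x : Fin 1 × Fin q => (max |a x.1| |b x.2|)/2), ← Finset.sum_div, hCP]
      simp
    have s6 : (∑ _x : Fin 1 × Fin q, ∑ x' : Fin 1 × Fin q, (max |a x'.1| |b x'.2|)/2) =
        (q:ℝ) * ((∑ i, ∑ j, max |a i| |b j|)/2) := by
      rw [double_outer (fun x : Fin 1 × Fin q => (max |a x.1| |b x.2|)/2), ← Finset.sum_div, hCP]
      simp
    have hsplit : (∑ x : Fin 1 × Fin q, ∑ x' : Fin 1 × Fin q,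
          (2 * max |b x.2| |b x'.2| + |a x.1| + |b x.2|/2 + |b x'.2|/2
            + (max |a x.1| |b x.2|)/2 + (max |a x'.1| |b x'.2|)/2)) =
        2 * (((1:ℕ) : ℝ) * (((1:ℕ) : ℝ) * ∑ j, ∑ j', max |b j| |b j'|))
        + ((q:ℝ) * ((q : ℝ) * ∑ i, |a i|))
        + (q:ℝ) * ((((1:ℕ):ℝ) * ∑ j, |b j|)/2) + (q:ℝ) * ((((1:ℕ):ℝ) * ∑ j, |b j|)/2)
        + (q:ℝ) * ((∑ i, ∑ j, max |a i| |b j|)/2)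
        + (q:ℝ) * ((∑ i, ∑ j, max |a i| |b j|)/2) := by
      simp only [Finset.sum_add_distrib]
      rw [s1, s2, s3, s4, s5, s6]
    rw [hsplit] at hkeyD
    rw [hrD, hrBS, hSsum, hrCa, hrCb, hMaA1]
    simp only [Nat.cast_one, one_mul] at hkeyD ⊢
    rcases lt_or_ge 2 q with hq3 | hq3
    · rw [if_pos hq3]
      have hq3R : (3 : ℝ) ≤ (q : ℝ) := by
        have : 3 ≤ q := by omega
        exact_mod_cast this
      have g1 : 9 * ∑ i : Fin 1, |a i| ≤ (q:ℝ) * ((q:ℝ) * ∑ i : Fin 1, |a i|) := by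
        nlinarith [mul_nonneg (sub_nonneg.2 hq3R) hA0,
          mul_nonneg (sub_nonneg.2 hq3R) (mul_nonneg (sub_nonneg.2 hq3R) hA0)]
      have g2 : 3 * ∑ j, |b j| ≤ (q:ℝ) * ∑ j, |b j| := by
        nlinarith [mul_nonneg (sub_nonneg.2 hq3R) hB0]
      have g3 : 3 * ∑ i, ∑ j, max |a i| |b j| ≤ (q:ℝ) * ∑ i, ∑ j, max |a i| |b j| := by
        nlinarith [mul_nonneg (sub_nonneg.2 hq3R) hC0]
      linarith
    · rw [if_neg (not_lt.2 hq3)]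
      have g1 : 4 * ∑ i : Fin 1, |a i| ≤ (q:ℝ) * ((q:ℝ) * ∑ i : Fin 1, |a i|) := by
        nlinarith [mul_nonneg (sub_nonneg.2 hqR) hA0,
          mul_nonneg (sub_nonneg.2 hqR) (mul_nonneg (sub_nonneg.2 hqR) hA0)]
      have g2 : 2 * ∑ j, |b j| ≤ (q:ℝ) * ∑ j, |b j| := by
        nlinarith [mul_nonneg (sub_nonneg.2 hqR) hB0]
      have g3 : 2 * ∑ i, ∑ j, max |a i| |b j| ≤ (q:ℝ) * ∑ i, ∑ j, max |a i| |b j| := by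
        nlinarith [mul_nonneg (sub_nonneg.2 hqR) hC0]
      linarith
  · -- 2 ≤ p
    have hp2' : 2 ≤ p := hp2
    have hpR : (2 : ℝ) ≤ (p : ℝ) := by exact_mod_cast hp2'
    have cnt1 : (∑ x : Fin p × Fin q, ∑ x' : Fin p × Fin q, max |a x.1| |a x'.1|) =
        (q : ℝ) * ((q : ℝ) * ∑ i, ∑ i', max |a i| |a i'|) := by
      have h1 : ∀ x : Fin p × Fin q, (∑ x' : Fin p × Fin q, max |a x.1| |a x'.1|)
          = (q:ℝ) * ∑ i', max |a x.1| |a i'| := fun x => sum_fst (fun i' => max |a x.1| |a i'|)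
      rw [Finset.sum_congr rfl fun x _ => h1 x, ← Finset.mul_sum,
        sum_fst (fun i => ∑ i', max |a i| |a i'|)]
    have cnt2 : (∑ x : Fin p × Fin q, ∑ x' : Fin p × Fin q, max |b x.2| |b x'.2|) =
        (p : ℝ) * ((p : ℝ) * ∑ j, ∑ j', max |b j| |b j'|) := by
      have h1 : ∀ x : Fin p × Fin q, (∑ x' : Fin p × Fin q, max |b x.2| |b x'.2|)
          = (p:ℝ) * ∑ j', max |b x.2| |b j'| := fun x => sum_snd (fun j' => max |b x.2| |b j'|)
      rw [Finset.sum_congr rfl fun x _ => h1 x, ← Finset.mul_sum,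
        sum_snd (fun j => ∑ j', max |b j| |b j'|)]
    have cnt3 : (∑ x : Fin p × Fin q, ∑ _x' : Fin p × Fin q, max |a x.1| |b x.2|) =
        (((p * q : ℕ)) : ℝ) * ∑ i, ∑ j, max |a i| |b j| := by
      rw [double_inner (fun x : Fin p × Fin q => max |a x.1| |b x.2|), hCP]
      simp
    have cnt4 : (∑ _x : Fin p × Fin q, ∑ x' : Fin p × Fin q, max |a x'.1| |b x'.2|) =
        (((p * q : ℕ)) : ℝ) * ∑ i, ∑ j, max |a i| |b j| := by
      rw [double_outer (fun x : Fin p × Fin q => max |a x.1| |b x.2|), hCP]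
      simp
    have hkey : (∑ x : Fin p × Fin q, ∑ x' : Fin p × Fin q,
          (max |a x.1| |a x'.1| + max |b x.2| |b x'.2|
            + max |a x.1| |b x.2| + max |a x'.1| |b x'.2|)) ≤
        ∑ x : Fin p × Fin q, ∑ x' : Fin p × Fin q,
          (max |a x.1 + b x.2| |a x'.1 + b x'.2| + max |a x.1 + b x.2| |a x'.1 - b x'.2|
           + max |a x.1 - b x.2| |a x'.1 + b x'.2| + max |a x.1 - b x.2| |a x'.1 - b x'.2|) :=
      Finset.sum_le_sum fun x _ => Finset.sum_le_sum fun x' _ =>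
        keyA' (a x.1) (b x.2) (a x'.1) (b x'.2)
    have hsplit : (∑ x : Fin p × Fin q, ∑ x' : Fin p × Fin q,
          (max |a x.1| |a x'.1| + max |b x.2| |b x'.2|
            + max |a x.1| |b x.2| + max |a x'.1| |b x'.2|)) =
        (q : ℝ) * ((q : ℝ) * ∑ i, ∑ i', max |a i| |a i'|)
        + (p : ℝ) * ((p : ℝ) * ∑ j, ∑ j', max |b j| |b j'|)
        + (((p * q : ℕ)) : ℝ) * (∑ i, ∑ j, max |a i| |b j|)
        + (((p * q : ℕ)) : ℝ) * (∑ i, ∑ j, max |a i| |b j|) := by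
      simp only [Finset.sum_add_distrib]
      rw [cnt1, cnt2, cnt3, cnt4]
    rw [hsplit] at hkey
    have hif : 2 < p * q := lt_of_lt_of_le (by norm_num) (Nat.mul_le_mul hp2' hq)
    rw [if_pos hif, hrD, hrBS, hSsum, hrCa, hrCb]
    have hpqR : (1 : ℝ) ≤ (((p * q : ℕ)) : ℝ) := by
      have : 1 ≤ p * q := le_trans hp (Nat.le_mul_of_pos_right p (by omega))
      exact_mod_cast this
    have f1 : 4 * ∑ i, ∑ i', max |a i| |a i'| ≤
        (q : ℝ) * ((q : ℝ) * ∑ i, ∑ i', max |a i| |a i'|) := by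
      nlinarith [mul_nonneg (sub_nonneg.2 hqR) hMa0,
        mul_nonneg (sub_nonneg.2 hqR) (mul_nonneg (sub_nonneg.2 hqR) hMa0)]
    have f2 : 4 * ∑ j, ∑ j', max |b j| |b j'| ≤
        (p : ℝ) * ((p : ℝ) * ∑ j, ∑ j', max |b j| |b j'|) := by
      nlinarith [mul_nonneg (sub_nonneg.2 hpR) hMb0,
        mul_nonneg (sub_nonneg.2 hpR) (mul_nonneg (sub_nonneg.2 hpR) hMb0)]
    have f3 : 2 * (∑ i, ∑ j, max |a i| |b j|) ≤
        (((p * q : ℕ)) : ℝ) * (∑ i, ∑ j, max |a i| |b j|)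
        + (((p * q : ℕ)) : ℝ) * (∑ i, ∑ j, max |a i| |b j|) := by
      nlinarith [mul_nonneg (sub_nonneg.2 hpqR) hC0]
    have f4 : 2 * ∑ i, |a i| ≤ (p : ℝ) * ∑ i, |a i| := by
      nlinarith [mul_nonneg (sub_nonneg.2 hpR) hA0]
    have f5 : 2 * ∑ j, |b j| ≤ (q : ℝ) * ∑ j, |b j| := by
      nlinarith [mul_nonneg (sub_nonneg.2 hqR) hB0]
    linarith

/-- Benoist–Kobayashi inequalities for the tensor embedding
`𝔥 = 𝔰𝔭_p ⊕ 𝔰𝔭_q ⊂ 𝔤 = 𝔰𝔬_{4pq}`. -/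
theorem stmt9 (p q : ℕ) (hp : 1 ≤ p) (hq : 2 ≤ q) :
    (∀ (a : Fin p → ℝ) (b : Fin q → ℝ),
        2 * (rhoC a + rhoC b) ≤
          rhoD (Sum.elim (fun x : Fin p × Fin q => a x.1 + b x.2)
            (fun x : Fin p × Fin q => a x.1 - b x.2))) ∧
    ((∀ (a : Fin p → ℝ) (b : Fin q → ℝ), ¬(a = 0 ∧ b = 0) →
        2 * (rhoC a + rhoC b) <
          rhoD (Sum.elim (fun x : Fin p × Fin q => a x.1 + b x.2)
            (fun x : Fin p × Fin q => a x.1 - b x.2))) ↔ 2 < p * q) := by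
  constructor
  · intro a b
    have h := main_ineq p q hp hq a b
    have hm : (0:ℝ) ≤ (if 2 < p * q then (∑ i, |a i|) + (∑ j, |b j|) else 0) := by
      split
      · have h1 : (0:ℝ) ≤ ∑ i, |a i| := Finset.sum_nonneg fun i _ => abs_nonneg _
        have h2 : (0:ℝ) ≤ ∑ j, |b j| := Finset.sum_nonneg fun j _ => abs_nonneg _
        linarith
      · exact le_refl 0
    linarith
  · constructor
    · intro hstrict
      by_contra hle
      push_neg at hle
      have h2p : p * 2 ≤ p * q := Nat.mul_le_mul_left p hq
      have hp1 : p = 1 := by omega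
      have hq2 : q = 2 := by
        subst hp1; omega
      subst hp1; subst hq2
      have hcontra := hstrict 0 (fun _ => 1) (by
        intro h
        have := congrFun h.2 0
        norm_num at this)
      revert hcontra
      simp only [rhoD, rhoC, rhoB, Fintype.sum_sum_type, Fintype.sum_prod_type,
        Sum.elim_inl, Sum.elim_inr, Fin.sum_univ_two, Fin.sum_univ_one, Pi.zero_apply]
      norm_num
    · intro hpq a b hab
      have h := main_ineq p q hp hq a b
      rw [if_pos hpq] at h
      have hpos : 0 < (∑ i, |a i|) + (∑ j, |b j|) := by
        have h1 : (0:ℝ) ≤ ∑ i, |a i| := Finset.sum_nonneg fun i _ => abs_nonneg _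
        have h2 : (0:ℝ) ≤ ∑ j, |b j| := Finset.sum_nonneg fun j _ => abs_nonneg _
        rcases not_and_or.1 hab with ha | hb
        · obtain ⟨i, hi⟩ := Function.ne_iff.1 ha
          have : 0 < ∑ i, |a i| :=
            Finset.sum_pos' (fun i _ => abs_nonneg _) ⟨i, Finset.mem_univ i, abs_pos.2 hi⟩
          linarith
        · obtain ⟨j, hj⟩ := Function.ne_iff.1 hb
          have : 0 < ∑ j, |b j| :=
            Finset.sum_pos' (fun j _ => abs_nonneg _) ⟨j, Finset.mem_univ j, abs_pos.2 hj⟩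
          linarith
      linarith
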